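/- Let n = 2 and let (A, b) be the Brunovsky pair with state transition matrix Φ(t,s) = exp((t−s)A) and controllability Gramian M(t,s). Define P(t) = Φ(t,1) M(1,t) M(1,0)⁻¹ Φ(1,0) and Q(t) = M(t,0) Φ(1,t)ᵀ M(1,0)⁻¹. Then for every t ∈ [0,1]: P(t) is the 2×2 matrix with rows (−2(1−t)³ + 3(1−t)², −(1−t)³ + (1−t)²) and (6(1−t)² − 6(1−t), 3(1−t)² − 2(1−t)), and Q(t) is the 2×2 matrix with rows (−2t³ + 3t², t³ − t²) and (−6t² + 6t, 3t² − 2t). -/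

import Mathlib

open NormedSpace Matrix

attribute [local instance] Matrix.normedAddCommGroup Matrix.normedSpace

/-- The controllability Gramian `M(t,s) = ∫ₛᵗ exp((t−τ)A) b bᵀ exp((t−τ)Aᵀ) dτ`. -/
noncomputable def controllabilityGramian {n : ℕ} (A : Matrix (Fin n) (Fin n) ℝ)
    (b : Fin n → ℝ) (t s : ℝ) : Matrix (Fin n) (Fin n) ℝ :=
  ∫ τ in s..t, NormedSpace.exp ((t - τ) • A) * Matrix.vecMulVec b b * NormedSpace.exp ((t - τ) • Aᵀ)

lemma exp_sq_zero (X : Matrix (Fin 2) (Fin 2) ℝ) (h : X ^ 2 = 0) : NormedSpace.exp X = 1 + X := by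
  rw [exp_eq_tsum ℝ]
  show (∑' n : ℕ, ((n.factorial : ℝ))⁻¹ • X ^ n) = 1 + X
  rw [tsum_eq_sum (s := Finset.range 2) (fun n hn => by
    simp only [Finset.mem_range, not_lt] at hn
    obtain ⟨k, rfl⟩ := Nat.exists_eq_add_of_le hn
    rw [pow_add, h, zero_mul, smul_zero])]
  simp [Finset.sum_range_succ, Nat.factorial]

lemma exp_cA (c : ℝ) : NormedSpace.exp (c • (!![0, 1; 0, 0] : Matrix (Fin 2) (Fin 2) ℝ)) = !![1, c; 0, 1] := by
  rw [exp_sq_zero]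
  · ext i j; fin_cases i <;> fin_cases j <;> simp [Matrix.one_fin_two]
  · rw [smul_pow]
    have : (!![0, 1; 0, 0] : Matrix (Fin 2) (Fin 2) ℝ) ^ 2 = 0 := by
      ext i j; fin_cases i <;> fin_cases j <;> simp [pow_two, Matrix.mul_apply, Fin.sum_univ_two]
    rw [this, smul_zero]

lemma gram (t s : ℝ) :
    controllabilityGramian !![0, 1; 0, 0] ![0, 1] t s =
      !![(t - s) ^ 3 / 3, (t - s) ^ 2 / 2; (t - s) ^ 2 / 2, t - s] := by
  have key : ∀ τ : ℝ, NormedSpace.exp ((t - τ) • (!![0, 1; 0, 0] : Matrix (Fin 2) (Fin 2) ℝ)) *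
      Matrix.vecMulVec ![0, 1] ![0, 1] *
      NormedSpace.exp ((t - τ) • (!![0, 1; 0, 0] : Matrix (Fin 2) (Fin 2) ℝ)ᵀ) =
      ((t - τ) ^ 2) • (!![1, 0; 0, 0] : Matrix (Fin 2) (Fin 2) ℝ) +
        ((t - τ) • (!![0, 1; 1, 0] : Matrix (Fin 2) (Fin 2) ℝ) +
          (!![0, 0; 0, 1] : Matrix (Fin 2) (Fin 2) ℝ)) := by
    intro τ
    rw [← transpose_smul, Matrix.exp_transpose, exp_cA]
    ext i j
    fin_cases i <;> fin_cases j <;>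
      simp [Matrix.mul_apply, Fin.sum_univ_two, Matrix.vecMulVec_apply, Matrix.vecHead, Matrix.vecTail] <;> ring
  unfold controllabilityGramian
  simp_rw [key]
  rw [intervalIntegral.integral_add, intervalIntegral.integral_add,
    intervalIntegral.integral_smul_const, intervalIntegral.integral_smul_const]
  · have h2 : (∫ τ in s..t, (t - τ) ^ 2) = (t - s) ^ 3 / 3 := by
      rw [intervalIntegral.integral_comp_sub_left (fun x => x ^ 2) t]
      simp [integral_pow]
      norm_num
    have h1 : (∫ τ in s..t, (t - τ)) = (t - s) ^ 2 / 2 := by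
      rw [intervalIntegral.integral_comp_sub_left (fun x => x) t]
      simp [integral_id]
      try ring
    rw [h2, h1, intervalIntegral.integral_const]
    ext i j
    fin_cases i <;> fin_cases j <;> simp <;> ring
  · exact Continuous.intervalIntegrable (by fun_prop) _ _
  · exact Continuous.intervalIntegrable (by continuity) _ _
  · exact Continuous.intervalIntegrable (by fun_prop) _ _
  · exact Continuous.intervalIntegrable (by fun_prop) _ _

lemma Minv : (controllabilityGramian !![0, 1; 0, 0] ![0, 1] 1 0)⁻¹ =
    (!![12, -6; -6, 4] : Matrix (Fin 2) (Fin 2) ℝ) := by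
  rw [_root_.gram]
  apply Matrix.inv_eq_right_inv
  ext i j
  fin_cases i <;> fin_cases j <;>
    simp [Matrix.mul_apply, Fin.sum_univ_two, Matrix.one_fin_two] <;> norm_num

/-- **Explicit interpolation matrices `P(t)`, `Q(t)` for the double integrator (`n = 2`).**
For the 2-dimensional Brunovsky pair `(A, b)` with `Φ(t,s) = exp((t−s)A)` and Gramian
`M(t,s)`, the matrices `P(t) = Φ(t,1) M(1,t) M(1,0)⁻¹ Φ(1,0)` and
`Q(t) = M(t,0) Φ(1,t)ᵀ M(1,0)⁻¹` are, for every `t ∈ [0,1]`,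
`P(t) = [[−2(1−t)³+3(1−t)², −(1−t)³+(1−t)²], [6(1−t)²−6(1−t), 3(1−t)²−2(1−t)]]` and
`Q(t) = [[−2t³+3t², t³−t²], [−6t²+6t, 3t²−2t]]`. -/
theorem double_integrator_interpolation_matrices
    (A : Matrix (Fin 2) (Fin 2) ℝ) (hA : A = !![0, 1; 0, 0])
    (b : Fin 2 → ℝ) (hb : b = ![0, 1])
    (P Q : ℝ → Matrix (Fin 2) (Fin 2) ℝ)
    (hP : ∀ t : ℝ, P t = NormedSpace.exp ((t - 1) • A) * controllabilityGramian A b 1 t *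
        (controllabilityGramian A b 1 0)⁻¹ * NormedSpace.exp (((1 : ℝ) - 0) • A))
    (hQ : ∀ t : ℝ, Q t = controllabilityGramian A b t 0 *
        (NormedSpace.exp (((1 : ℝ) - t) • A))ᵀ * (controllabilityGramian A b 1 0)⁻¹) :
    ∀ t ∈ Set.Icc (0 : ℝ) 1,
      P t = !![-2 * (1 - t) ^ 3 + 3 * (1 - t) ^ 2, -(1 - t) ^ 3 + (1 - t) ^ 2;
               6 * (1 - t) ^ 2 - 6 * (1 - t), 3 * (1 - t) ^ 2 - 2 * (1 - t)] ∧
      Q t = !![-2 * t ^ 3 + 3 * t ^ 2, t ^ 3 - t ^ 2;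
               -6 * t ^ 2 + 6 * t, 3 * t ^ 2 - 2 * t] := by
  subst hA hb
  intro t _
  constructor
  · rw [hP t, _root_.gram, Minv, exp_cA, exp_cA]
    ext i j
    fin_cases i <;> fin_cases j <;>
      simp [Matrix.mul_apply, Fin.sum_univ_two] <;> ring
  · rw [hQ t, _root_.gram, Minv, exp_cA]
    ext i j
    fin_cases i <;> fin_cases j <;>
      simp [Matrix.mul_apply, Fin.sum_univ_two, Matrix.transpose_apply, Matrix.vecHead, Matrix.vecTail, Matrix.vecMul, dotProduct] <;> ring
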